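/- Let ψ_1, ψ_2, ψ_3 be unit vectors in ℂ³ with |⟨ψ_i, ψ_j⟩|² = 1/4 for all i ≠ j, let ρ_i = |ψ_i⟩⟨ψ_i| and M = ρ_1 + ρ_2 + ρ_3. Then |tr(ρ_1 ρ_2 ρ_3)| = 1/8, and writing tr(ρ_1 ρ_2 ρ_3) = (1/8) e^{iφ} with φ ∈ ℝ, one has tr(M) = 3, tr(M²) = 9/2, and tr(M³) = 15/2 + (3/4) cos φ. In particular the eigenvalues of M are determined by the geometric phase φ, which is the only independent unitary invariant of the triple. -/

import Mathlib

noncomputable section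

open Complex Matrix

/-- The standard Hermitian inner product on `ℂ³`, conjugate-linear in the first argument. -/
def inn (x y : Fin 3 → ℂ) : ℂ := ∑ i, (starRingEnd ℂ) (x i) * y i

/-- The rank-one projection `|φ⟩⟨φ|` onto the line of a unit vector `φ`. -/
def proj (φ : Fin 3 → ℂ) : Matrix (Fin 3) (Fin 3) ℂ :=
  Matrix.vecMulVec φ fun i => (starRingEnd ℂ) (φ i)

/-!
Expanding `M³` into the 27 traces `tr(ρ_i ρ_j ρ_k) = ⟨ψ_i,ψ_j⟩⟨ψ_j,ψ_k⟩⟨ψ_k,ψ_i⟩`, the words using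
one letter contribute `1`, those using two letters `|⟨ψ_i,ψ_j⟩|² = 1/4`, and the six using all
three letters contribute `3 (t + t̄) = 6 Re t` where `t = tr(ρ_1 ρ_2 ρ_3) = e^{iφ}/8`.
-/

open ComplexConjugate

section

variable (a b c : Fin 3 → ℂ)

lemma inn_eq_star_dotProduct : inn a b = star a ⬝ᵥ b := rfl

lemma proj_eq_vecMulVec : proj a = vecMulVec a (star a) := rfl

lemma inn_swap : inn b a = conj (inn a b) := star_dotProduct b a

lemma inn_mul_inn_swap : inn a b * inn b a = normSq (inn a b) := by
  rw [inn_swap a b, mul_conj]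

lemma proj_mul_proj : proj a * proj b = inn a b • vecMulVec a (star b) := by
  rw [proj_eq_vecMulVec, proj_eq_vecMulVec, vecMulVec_mul_vecMulVec, vecMulVec_smul,
    inn_eq_star_dotProduct]

lemma trace_proj : trace (proj a) = inn a a := by
  rw [proj_eq_vecMulVec, trace_vecMulVec, dotProduct_comm, inn_eq_star_dotProduct]

lemma trace_proj_mul_proj : trace (proj a * proj b) = inn a b * inn b a := by
  rw [proj_mul_proj, trace_smul, trace_vecMulVec, dotProduct_comm, smul_eq_mul,
    inn_eq_star_dotProduct b]

lemma trace_proj_mul_proj_mul_proj :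
    trace (proj a * proj b * proj c) = inn a b * inn b c * inn c a := by
  rw [proj_mul_proj, smul_mul_assoc, proj_eq_vecMulVec c, vecMulVec_mul_vecMulVec, trace_smul,
    trace_vecMulVec, dotProduct_smul, dotProduct_comm a, smul_eq_mul, smul_eq_mul,
    inn_eq_star_dotProduct b, inn_eq_star_dotProduct c]
  ring

variable {a b c}

lemma trace_sum_proj_sq (ha : inn a a = 1) (hb : inn b b = 1) (hc : inn c c = 1) :
    trace ((proj a + proj b + proj c) ^ 2) =
      (3 : ℂ) + 2 * ((normSq (inn a b) + normSq (inn b c) + normSq (inn c a) : ℝ) : ℂ) := by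
  simp only [sq, add_mul, mul_add, trace_add, trace_proj_mul_proj, ha, hb, hc]
  push_cast
  linear_combination
    2 * inn_mul_inn_swap a b + 2 * inn_mul_inn_swap b c + 2 * inn_mul_inn_swap c a

lemma trace_sum_proj_cube (ha : inn a a = 1) (hb : inn b b = 1) (hc : inn c c = 1) :
    trace ((proj a + proj b + proj c) ^ 3) =
      (3 : ℂ) + 6 * ((normSq (inn a b) + normSq (inn b c) + normSq (inn c a) : ℝ) : ℂ) +
        6 * ((inn a b * inn b c * inn c a).re : ℂ) := by
  have hcycle := add_conj (inn a b * inn b c * inn c a)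
  simp only [map_mul, ← inn_swap] at hcycle
  simp only [pow_succ, pow_zero, one_mul, add_mul, mul_add, trace_add,
    trace_proj_mul_proj_mul_proj, ha, hb, hc]
  push_cast at hcycle ⊢
  linear_combination 6 * inn_mul_inn_swap a b + 6 * inn_mul_inn_swap b c +
    6 * inn_mul_inn_swap c a + 3 * hcycle

end

/-- For three unit vectors in `ℂ³` with pairwise squared overlaps `1/4`
(e.g. any three vectors of a SIC POVM in dimension 3), with `ρ_i = |ψ_i⟩⟨ψ_i|` and
`M = ρ_1 + ρ_2 + ρ_3`: `|tr(ρ_1 ρ_2 ρ_3)| = 1/8`, and if `tr(ρ_1 ρ_2 ρ_3) = (1/8) e^{iφ}`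
then `tr M = 3`, `tr M² = 9/2` and `tr M³ = 15/2 + (3/4) cos φ`. -/
theorem dim3_triple_invariants (ψ : Fin 3 → (Fin 3 → ℂ))
    (hunit : ∀ i, inn (ψ i) (ψ i) = 1)
    (hover : ∀ i j, i ≠ j → ‖inn (ψ i) (ψ j)‖ ^ 2 = 1 / 4) :
    ‖Matrix.trace (proj (ψ 0) * proj (ψ 1) * proj (ψ 2))‖ = 1 / 8 ∧
    ∀ φ : ℝ, Matrix.trace (proj (ψ 0) * proj (ψ 1) * proj (ψ 2)) =
        (1 / 8) * Complex.exp (Complex.I * (φ : ℂ)) →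
      Matrix.trace (proj (ψ 0) + proj (ψ 1) + proj (ψ 2)) = 3 ∧
      Matrix.trace ((proj (ψ 0) + proj (ψ 1) + proj (ψ 2)) ^ 2) = 9 / 2 ∧
      Matrix.trace ((proj (ψ 0) + proj (ψ 1) + proj (ψ 2)) ^ 3) =
        15 / 2 + (3 / 4) * ((Real.cos φ : ℝ) : ℂ) := by
  have hnormSq : ∀ i j, i ≠ j → normSq (inn (ψ i) (ψ j)) = 1 / 4 := fun i j hij => by
    rw [← Complex.sq_norm, hover i j hij]
  refine ⟨?_, fun φ hφ => ⟨?_, ?_, ?_⟩⟩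
  · rw [trace_proj_mul_proj_mul_proj, ← pow_left_inj₀ (norm_nonneg _) (by norm_num) two_ne_zero,
      norm_mul, norm_mul, mul_pow, mul_pow, hover 0 1 (by decide), hover 1 2 (by decide),
      hover 2 0 (by decide)]
    norm_num
  · rw [trace_add, trace_add, trace_proj, trace_proj, trace_proj, hunit, hunit, hunit]
    norm_num
  · rw [trace_sum_proj_sq (hunit 0) (hunit 1) (hunit 2), hnormSq 0 1 (by decide),
      hnormSq 1 2 (by decide), hnormSq 2 0 (by decide)]
    norm_num
  · have hre : (inn (ψ 0) (ψ 1) * inn (ψ 1) (ψ 2) * inn (ψ 2) (ψ 0)).re = Real.cos φ / 8 := by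
      rw [← trace_proj_mul_proj_mul_proj, hφ, mul_comm I]
      simp [exp_ofReal_mul_I_re, div_eq_inv_mul]
    rw [trace_sum_proj_cube (hunit 0) (hunit 1) (hunit 2), hnormSq 0 1 (by decide),
      hnormSq 1 2 (by decide), hnormSq 2 0 (by decide), hre]
    push_cast
    ring
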